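/- Let G be a finite undirected simple graph without self-loops on vertex set V with embedding X : V → ℝ^d, node energies E_i = (1/2)·C·∑_{j ∈ N_i} ‖X_j − X_i‖² for a constant C > 0, unnormalized probabilities P_i = exp(−E_i/T), entropy S(X) = −∑_{i∈V} P_i ln P_i, and P̄_i = P_i(1 + ln P_i). Then the gradient of S with respect to X_i equals (C/T)·∑_{j ∈ N_i} (P̄_j + P̄_i)·(X_i − X_j). -/

import Mathlib

/-!
Write `-P ln P = negMulLog P` with `P = exp (-E / T)`: the derivative of
`u ↦ negMulLog (exp (-u / T))` at `E_k` is `P̄_k / T`, so by the chain rule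
`∇_{X_i} S = ∑_k (P̄_k / T) ∇_{X_i} E_k`. Only `E_i` and the `E_k` with `k ∈ N_i` depend on `X_i`,
with `∇_{X_i} E_i = C ∑_{j ∈ N_i} (X_i - X_j)` and `∇_{X_i} E_k = C (X_i - X_k)`; collecting the
two contributions of each edge `{i, j}` gives the weight `P̄_j + P̄_i`.
-/

open Finset Real InnerProductSpace Function

section GradientCalculus

variable {F : Type*} [NormedAddCommGroup F] [InnerProductSpace ℝ F] [CompleteSpace F]
  {f : F → ℝ} {f' x : F}

theorem HasGradientAt.fun_sum {ι : Type*} {u : Finset ι} {f : ι → F → ℝ} {f' : ι → F}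
    (h : ∀ k ∈ u, HasGradientAt (f k) (f' k) x) :
    HasGradientAt (fun y => ∑ k ∈ u, f k y) (∑ k ∈ u, f' k) x := by
  rw [hasGradientAt_iff_hasFDerivAt, map_sum]
  exact HasFDerivAt.fun_sum fun k hk => hasGradientAt_iff_hasFDerivAt.mp (h k hk)

theorem HasGradientAt.const_mul (c : ℝ) (h : HasGradientAt f f' x) :
    HasGradientAt (fun y => c * f y) (c • f') x := by
  rw [hasGradientAt_iff_hasFDerivAt, map_smul]
  exact (hasGradientAt_iff_hasFDerivAt.mp h).const_mul c

theorem HasDerivAt.comp_hasGradientAt {φ : ℝ → ℝ} {φ' : ℝ} (hφ : HasDerivAt φ φ' (f x))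
    (hf : HasGradientAt f f' x) : HasGradientAt (fun y => φ (f y)) (φ' • f') x := by
  rw [hasGradientAt_iff_hasFDerivAt, map_smul]
  exact hφ.comp_hasFDerivAt x (hasGradientAt_iff_hasFDerivAt.mp hf)

theorem hasGradientAt_norm_sub_sq (a : F) :
    HasGradientAt (fun y => ‖y - a‖ ^ 2) ((2 : ℝ) • (x - a)) x := by
  rw [hasGradientAt_iff_hasFDerivAt]
  refine ((hasFDerivAt_id x).sub_const a).norm_sq.congr_fderiv ?_
  ext w
  simp

theorem hasGradientAt_sub_norm_sq (a : F) :
    HasGradientAt (fun y => ‖a - y‖ ^ 2) ((2 : ℝ) • (x - a)) x := by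
  simpa only [norm_sub_rev] using hasGradientAt_norm_sub_sq a

theorem hasGradientAt_norm_update_sub_update_sq {V : Type*} [DecidableEq V] (X : V → F)
    (i j k : V) :
    HasGradientAt (fun y => ‖update X i y j - update X i y k‖ ^ 2)
      ((2 * ((if j = i then 1 else 0) - (if k = i then 1 else 0)) : ℝ) • (X j - X k)) (X i) := by
  by_cases hj : j = i <;> by_cases hk : k = i
  · subst j k
    simpa using hasGradientAt_const (X i) (0 : ℝ)
  · subst j
    simpa [hk, update_of_ne hk] using hasGradientAt_norm_sub_sq (x := X i) (X k)
  · subst k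
    convert hasGradientAt_sub_norm_sq (x := X i) (X j) using 1
    · simp [update_of_ne hj]
    · simp only [hj, if_false, if_true]
      module
  · simpa [hj, hk, update_of_ne hj, update_of_ne hk]
      using hasGradientAt_const (X i) (‖X j - X k‖ ^ 2)

end GradientCalculus

section GraphEnergy

variable {V : Type*} [Fintype V] [DecidableEq V] (G : SimpleGraph V) [DecidableRel G.Adj]

noncomputable def dirichletEnergy {F : Type*} [NormedAddCommGroup F] (C : ℝ) (Y : V → F) (k : V) :
    ℝ :=
  (C / 2) * ∑ j ∈ G.neighborFinset k, ‖Y j - Y k‖ ^ 2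

theorem hasGradientAt_dirichletEnergy_update {F : Type*} [NormedAddCommGroup F]
    [InnerProductSpace ℝ F] [CompleteSpace F] (C : ℝ) (X : V → F) (i k : V) :
    HasGradientAt (fun y => dirichletEnergy G C (update X i y) k)
      (C • ∑ j ∈ G.neighborFinset k,
        ((if j = i then 1 else 0) - (if k = i then 1 else 0) : ℝ) • (X j - X k)) (X i) := by
  convert (HasGradientAt.fun_sum (u := G.neighborFinset k) fun j _ =>
    hasGradientAt_norm_update_sub_update_sq X i j k).const_mul (C / 2) using 1
  · rfl
  rw [smul_sum, smul_sum]
  refine sum_congr rfl fun j _ => ?_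
  rw [smul_smul, smul_smul]
  ring_nf

theorem sum_smul_sum_neighborFinset_sub_indicator {R M : Type*} [CommRing R] [AddCommGroup M]
    [Module R M] (w : V → R) (X : V → M) (i : V) :
    ∑ k, w k • ∑ j ∈ G.neighborFinset k,
        ((if j = i then 1 else 0) - (if k = i then 1 else 0) : R) • (X j - X k)
      = ∑ j ∈ G.neighborFinset i, (w j + w i) • (X i - X j) := by
  have hfirst : ∑ k, w k • ∑ j ∈ G.neighborFinset k, (if j = i then 1 else 0 : R) • (X j - X k)
      = ∑ k ∈ G.neighborFinset i, w k • (X i - X k) := by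
    simp only [ite_smul, one_smul, zero_smul, sum_ite_eq', smul_ite, smul_zero,
      SimpleGraph.mem_neighborFinset, G.adj_comm _ i]
    rw [← sum_filter, G.neighborFinset_eq_filter]
  have hsecond : ∑ k, w k • ∑ j ∈ G.neighborFinset k, (if k = i then 1 else 0 : R) • (X j - X k)
      = w i • ∑ j ∈ G.neighborFinset i, (X j - X i) := by
    simp only [ite_smul, one_smul, zero_smul, sum_ite_irrel, sum_const_zero, smul_ite, smul_zero,
      sum_ite_eq', mem_univ, if_true]
  calc _ = ∑ k, w k • ∑ j ∈ G.neighborFinset k, (if j = i then 1 else 0 : R) • (X j - X k)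
        - ∑ k, w k • ∑ j ∈ G.neighborFinset k, (if k = i then 1 else 0 : R) • (X j - X k) := by
        simp only [← sub_smul, ← sum_sub_distrib, ← smul_sub]
    _ = ∑ k ∈ G.neighborFinset i, w k • (X i - X k)
          - w i • ∑ j ∈ G.neighborFinset i, (X j - X i) := by
        rw [hfirst, hsecond]
    _ = _ := by
        rw [smul_sum, ← sum_sub_distrib]
        refine sum_congr rfl fun j _ => ?_
        module

end GraphEnergy

theorem hasDerivAt_negMulLog_exp_neg_div (T u : ℝ) :
    HasDerivAt (fun u => negMulLog (exp (-u / T)))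
      (exp (-u / T) * (1 + log (exp (-u / T))) / T) u := by
  have hexp := ((hasDerivAt_neg u).div_const T).exp
  refine ((hasDerivAt_negMulLog (exp_pos (-u / T)).ne').comp u hexp).congr_deriv ?_
  ring

open Finset in
theorem entropy_gradient_general {V : Type*} [Fintype V] [DecidableEq V]
    (G : SimpleGraph V) [DecidableRel G.Adj] (d : ℕ)
    (X : V → EuclideanSpace ℝ (Fin d)) (C T : ℝ)
    (Efun : (V → EuclideanSpace ℝ (Fin d)) → V → ℝ)
    (hE : ∀ Y k, Efun Y k = (C / 2) * ∑ j ∈ G.neighborFinset k, ‖Y j - Y k‖ ^ 2)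
    (P : (V → EuclideanSpace ℝ (Fin d)) → V → ℝ)
    (hP : ∀ Y k, P Y k = Real.exp (-(Efun Y k) / T))
    (S : (V → EuclideanSpace ℝ (Fin d)) → ℝ)
    (hS : ∀ Y, S Y = -∑ k, P Y k * Real.log (P Y k))
    (Pbar : V → ℝ) (hPbar : ∀ k, Pbar k = P X k * (1 + Real.log (P X k)))
    (i : V) :
    gradient (fun y => S (Function.update X i y)) (X i)
      = (C / T) • ∑ j ∈ G.neighborFinset i, (Pbar j + Pbar i) • (X i - X j) := by
  have hP' : ∀ Y k, P Y k = exp (-dirichletEnergy G C Y k / T) := fun Y k => by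
    rw [hP, hE, dirichletEnergy]
  have hS' : (fun y => S (update X i y))
      = fun y => ∑ k, negMulLog (exp (-dirichletEnergy G C (update X i y) k / T)) := by
    funext y
    simp only [hS, hP', negMulLog, neg_mul, sum_neg_distrib]
  have hgrad := HasGradientAt.fun_sum (u := univ) fun k _ =>
    (hasDerivAt_negMulLog_exp_neg_div T _).comp_hasGradientAt
      (hasGradientAt_dirichletEnergy_update G C X i k)
  rw [hS', hgrad.gradient, ← sum_smul_sum_neighborFinset_sub_indicator G Pbar X i, smul_sum]
  refine sum_congr rfl fun k _ => ?_
  rw [update_eq_self, hPbar, hP']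
  module

open Finset in
/-- Entropy gradient theorem: with E_k = (C/2)∑_{j∈N_k}‖X_j−X_k‖²,
P_k = exp(−E_k/T), S = −∑_k P_k ln P_k and P̄_k = P_k(1+ln P_k), the gradient
of S with respect to X_i is (C/T)·∑_{j∈N_i}(P̄_j + P̄_i)(X_i − X_j). -/
theorem entropy_gradient {V : Type*} [Fintype V] [DecidableEq V]
    (G : SimpleGraph V) [DecidableRel G.Adj] (d : ℕ)
    (X : V → EuclideanSpace ℝ (Fin d)) (C T : ℝ) (hC : 0 < C) (hT : 0 < T)
    (Efun : (V → EuclideanSpace ℝ (Fin d)) → V → ℝ)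
    (hE : ∀ Y k, Efun Y k = (C / 2) * ∑ j ∈ G.neighborFinset k, ‖Y j - Y k‖ ^ 2)
    (P : (V → EuclideanSpace ℝ (Fin d)) → V → ℝ)
    (hP : ∀ Y k, P Y k = Real.exp (-(Efun Y k) / T))
    (S : (V → EuclideanSpace ℝ (Fin d)) → ℝ)
    (hS : ∀ Y, S Y = -∑ k, P Y k * Real.log (P Y k))
    (Pbar : V → ℝ) (hPbar : ∀ k, Pbar k = P X k * (1 + Real.log (P X k)))
    (i : V) :
    gradient (fun y => S (Function.update X i y)) (X i)
      = (C / T) • ∑ j ∈ G.neighborFinset i, (Pbar j + Pbar i) • (X i - X j) :=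
  entropy_gradient_general G d X C T Efun hE P hP S hS Pbar hPbar i
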